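/- arXiv:1902.05298 — 6 statements merged into one kernel-verified Lean document; each statement's English description precedes it below -/
import Mathlib

section
/- Let N_A, N_D be nilpotent n×n complex matrices. If P₊ (N_A ⊗ 𝟙 + 𝟙 ⊗ N_D) = 0, where P₊ is the orthogonal projection onto the symmetric subspace of ℂⁿ ⊗ ℂⁿ, then N_A ⊗ 𝟙 + 𝟙 ⊗ N_D = 0 (equivalently N_A = 0 and N_D = 0). -/
/-!
Since the flip fixes the basis vectors `eᵢ ⊗ eᵢ`, the rows `(i, i)` of `P₊ M` and of `M` agree,
so `M = N_A ⊗ 𝟙 + 𝟙 ⊗ N_D` vanishes on those rows. Reading off these rows shows that `N_A` is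
diagonal and `N_D = -N_A`; a nilpotent diagonal complex matrix is zero.
-/

open Matrix Kronecker

/-- The flip (swap) operator on `ℂⁿ ⊗ ℂⁿ`, as a matrix. -/
def swapMat (n : ℕ) : Matrix (Fin n × Fin n) (Fin n × Fin n) ℂ :=
  Matrix.of fun p q => if p.1 = q.2 ∧ p.2 = q.1 then 1 else 0

/-- The orthogonal projection onto the symmetric subspace of `ℂⁿ ⊗ ℂⁿ`. -/
noncomputable def symProj (n : ℕ) : Matrix (Fin n × Fin n) (Fin n × Fin n) ℂ :=
  (2 : ℂ)⁻¹ • (1 + swapMat n)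

lemma swapMat_mul_apply {n : ℕ} (M : Matrix (Fin n × Fin n) (Fin n × Fin n) ℂ)
    (p q : Fin n × Fin n) : (swapMat n * M) p q = M p.swap q := by
  rw [mul_apply, Finset.sum_eq_single p.swap]
  · simp [swapMat]
  · rintro r - hr
    have : ¬(p.1 = r.2 ∧ p.2 = r.1) := fun ⟨h₁, h₂⟩ => hr (Prod.ext h₂.symm h₁.symm)
    simp [swapMat, this]
  · simp

lemma apply_self_eq_zero_of_symProj_mul_eq_zero {n : ℕ}
    {M : Matrix (Fin n × Fin n) (Fin n × Fin n) ℂ} (h : symProj n * M = 0) (i : Fin n)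
    (q : Fin n × Fin n) : M (i, i) q = 0 := by
  have hiq := congr_fun₂ h (i, i) q
  simp only [symProj, Matrix.smul_mul, Matrix.add_mul, Matrix.one_mul, Matrix.smul_apply,
    Matrix.add_apply, swapMat_mul_apply, Prod.swap_prod_mk, Matrix.zero_apply, smul_eq_mul] at hiq
  linear_combination hiq

section KroneckerSum

variable {ι R : Type*} [DecidableEq ι] [CommRing R] {A B : Matrix ι ι R}

lemma kronecker_one_add_one_kronecker_apply_self (A B : Matrix ι ι R) (i k l : ι) :
    (A ⊗ₖ (1 : Matrix ι ι R) + (1 : Matrix ι ι R) ⊗ₖ B) (i, i) (k, l) =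
      A i k * (if i = l then 1 else 0) + (if i = k then 1 else 0) * B i l := by
  simp [one_apply]

lemma isDiag_of_kronecker_one_add_one_kronecker_apply_self_eq_zero
    (h : ∀ i q, (A ⊗ₖ (1 : Matrix ι ι R) + (1 : Matrix ι ι R) ⊗ₖ B) (i, i) q = 0) :
    A.IsDiag := by
  intro i k hik
  simpa [kronecker_one_add_one_kronecker_apply_self, hik] using h i (k, i)

lemma eq_neg_of_kronecker_one_add_one_kronecker_apply_self_eq_zero
    (h : ∀ i q, (A ⊗ₖ (1 : Matrix ι ι R) + (1 : Matrix ι ι R) ⊗ₖ B) (i, i) q = 0) :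
    B = -A := by
  ext j l
  by_cases hjl : j = l
  · subst hjl
    simpa [kronecker_one_add_one_kronecker_apply_self, eq_neg_iff_add_eq_zero, add_comm]
      using h j (j, j)
  · have hA := isDiag_of_kronecker_one_add_one_kronecker_apply_self_eq_zero h hjl
    simpa [kronecker_one_add_one_kronecker_apply_self, hjl, hA] using h j (j, l)

end KroneckerSum

lemma Matrix.IsDiag.eq_zero_of_isNilpotent {ι R : Type*} [Fintype ι] [DecidableEq ι]
    [CommRing R] [IsReduced R] {A : Matrix ι ι R} (hA : A.IsDiag) (hN : IsNilpotent A) :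
    A = 0 := by
  obtain ⟨s, hs⟩ := hN
  rw [← hA.diagonal_diag, diagonal_pow, diagonal_eq_zero] at hs
  rw [← hA.diagonal_diag, diagonal_eq_zero]
  exact IsNilpotent.eq_zero ⟨s, hs⟩

theorem nilpotent_tensor_sum_eq_zero_of_symProj_eq_zero_general
    (n : ℕ) (NA ND : Matrix (Fin n) (Fin n) ℂ)
    (hNA : IsNilpotent NA)
    (h : symProj n * (NA ⊗ₖ (1 : Matrix (Fin n) (Fin n) ℂ)
        + (1 : Matrix (Fin n) (Fin n) ℂ) ⊗ₖ ND) = 0) :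
    NA ⊗ₖ (1 : Matrix (Fin n) (Fin n) ℂ) + (1 : Matrix (Fin n) (Fin n) ℂ) ⊗ₖ ND = 0
      ∧ NA = 0 ∧ ND = 0 := by
  have hrows := apply_self_eq_zero_of_symProj_mul_eq_zero h
  have hNA0 : NA = 0 :=
    (isDiag_of_kronecker_one_add_one_kronecker_apply_self_eq_zero hrows).eq_zero_of_isNilpotent hNA
  have hND0 : ND = 0 := by
    rw [eq_neg_of_kronecker_one_add_one_kronecker_apply_self_eq_zero hrows, hNA0, neg_zero]
  exact ⟨by simp [hNA0, hND0], hNA0, hND0⟩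

/-- If `N_A`, `N_D` are nilpotent and `P₊ (N_A ⊗ 𝟙 + 𝟙 ⊗ N_D) = 0`, then
`N_A ⊗ 𝟙 + 𝟙 ⊗ N_D = 0`, equivalently `N_A = 0` and `N_D = 0`. -/
theorem nilpotent_tensor_sum_eq_zero_of_symProj_eq_zero
    (n : ℕ) (NA ND : Matrix (Fin n) (Fin n) ℂ)
    (hNA : IsNilpotent NA) (hND : IsNilpotent ND)
    (h : symProj n * (NA ⊗ₖ (1 : Matrix (Fin n) (Fin n) ℂ)
        + (1 : Matrix (Fin n) (Fin n) ℂ) ⊗ₖ ND) = 0) :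
    NA ⊗ₖ (1 : Matrix (Fin n) (Fin n) ℂ) + (1 : Matrix (Fin n) (Fin n) ℂ) ⊗ₖ ND = 0
      ∧ NA = 0 ∧ ND = 0 :=
  nilpotent_tensor_sum_eq_zero_of_symProj_eq_zero_general n NA ND hNA h
end

section
/- Let A, D be n×n complex matrices such that P₊ (Aᵀ ⊗ 𝟙 + 𝟙 ⊗ Dᵀ) = 0, where P₊ projects onto the symmetric subspace of ℂⁿ ⊗ ℂⁿ. Then for any eigenvalue λ of Aᵀ and any eigenvalue ω of Dᵀ, we have λ + ω = 0. In particular, Aᵀ and Dᵀ each have a single eigenvalue, λ and −λ respectively. -/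
/-!
If `M v = μ v` and `N w = ω w`, the product vector `v ⊗ w` is an eigenvector of the Kronecker
sum `M ⊗ 𝟙 + 𝟙 ⊗ N` with eigenvalue `μ + ω`, so `P₊ (M ⊗ 𝟙 + 𝟙 ⊗ N) = 0` forces
`(μ + ω) P₊ (v ⊗ w) = 0`. The symmetrization of a nonzero product vector never vanishes
(`v i w j + v j w i = 0` for all `i, j` makes `v i w i = 0`, hence `v ⊗ w = 0`), so `μ + ω = 0`.
Both spectra are nonempty over `ℂ`, and a pair of nonempty sets whose elements all sum to zero
must be `{l}` and `{-l}`.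
-/

open Matrix Kronecker

namespace Matrix

variable {K ι : Type*} [Field K] [Fintype ι] [DecidableEq ι]

theorem exists_mulVec_eq_smul_of_mem_spectrum {M : Matrix ι ι K} {μ : K}
    (hμ : μ ∈ spectrum K M) : ∃ v : ι → K, v ≠ 0 ∧ M *ᵥ v = μ • v := by
  rw [← spectrum_toLin', ← Module.End.hasEigenvalue_iff_mem_spectrum] at hμ
  obtain ⟨v, hv⟩ := hμ.exists_hasEigenvector
  exact ⟨v, hv.2, by simpa using hv.apply_eq_smul⟩

theorem kronecker_mulVec_mul {R ι κ : Type*} [CommSemiring R] [Fintype ι] [Fintype κ]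
    (M : Matrix ι ι R) (N : Matrix κ κ R) (v : ι → R) (w : κ → R) :
    (M ⊗ₖ N) *ᵥ (fun p => v p.1 * w p.2) = fun p => (M *ᵥ v) p.1 * (N *ᵥ w) p.2 := by
  funext p
  simp only [mulVec, dotProduct, kroneckerMap_apply, Fintype.sum_prod_type, Finset.sum_mul_sum]
  exact Finset.sum_congr rfl fun i _ => Finset.sum_congr rfl fun j _ => by ring

theorem kroneckerSum_mulVec_mul {M N : Matrix ι ι K} {v w : ι → K} {μ ω : K}
    (hv : M *ᵥ v = μ • v) (hw : N *ᵥ w = ω • w) :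
    (M ⊗ₖ (1 : Matrix ι ι K) + (1 : Matrix ι ι K) ⊗ₖ N) *ᵥ (fun p => v p.1 * w p.2)
      = (μ + ω) • fun p => v p.1 * w p.2 := by
  rw [add_mulVec, kronecker_mulVec_mul, kronecker_mulVec_mul, hv, hw, one_mulVec, one_mulVec]
  funext p
  simp only [Pi.add_apply, Pi.smul_apply, smul_eq_mul]
  ring

end Matrix

theorem exists_mul_add_mul_swap_ne_zero {R ι : Type*} [CommRing R] [NoZeroDivisors R]
    [NeZero (2 : R)] {v w : ι → R} (hv : v ≠ 0) (hw : w ≠ 0) :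
    ∃ i j, v i * w j + v j * w i ≠ 0 := by
  by_contra! hsym
  obtain ⟨i, hi⟩ := Function.ne_iff.mp hv
  obtain ⟨j, hj⟩ := Function.ne_iff.mp hw
  have hdiag (k : ι) : v k * w k = 0 := by
    refine (mul_eq_zero.mp (?_ : (2 : R) * (v k * w k) = 0)).resolve_left two_ne_zero
    linear_combination hsym k k
  have hwi : w i = 0 := (mul_eq_zero.mp (hdiag i)).resolve_left hi
  have hvj : v j = 0 := (mul_eq_zero.mp (hdiag j)).resolve_right hj
  exact mul_ne_zero hi hj (by simpa [hwi, hvj] using hsym i j)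

theorem swapMat_mulVec (n : ℕ) (x : Fin n × Fin n → ℂ) :
    swapMat n *ᵥ x = x ∘ Prod.swap := by
  funext p
  simp [swapMat, mulVec, dotProduct, Fintype.sum_prod_type, ite_and, eq_comm, Prod.swap]

theorem symProj_mulVec_apply (n : ℕ) (x : Fin n × Fin n → ℂ) (p : Fin n × Fin n) :
    (symProj n *ᵥ x) p = (2 : ℂ)⁻¹ * (x p + x p.swap) := by
  simp [symProj, smul_mulVec, add_mulVec, swapMat_mulVec, mul_add]

theorem symProj_mulVec_mul_ne_zero {n : ℕ} {v w : Fin n → ℂ} (hv : v ≠ 0) (hw : w ≠ 0) :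
    symProj n *ᵥ (fun p => v p.1 * w p.2) ≠ 0 := by
  obtain ⟨i, j, hij⟩ := exists_mul_add_mul_swap_ne_zero hv hw
  intro h
  have hsym : (2 : ℂ)⁻¹ * (v i * w j + v j * w i) = 0 := by
    simpa only [symProj_mulVec_apply, Prod.swap_prod_mk, Pi.zero_apply] using congrFun h (i, j)
  exact hij ((mul_eq_zero.mp hsym).resolve_left (inv_ne_zero two_ne_zero))

theorem add_eq_zero_of_symProj_mul_kroneckerSum_eq_zero {n : ℕ}
    {M N : Matrix (Fin n) (Fin n) ℂ}
    (h : symProj n * (M ⊗ₖ (1 : Matrix (Fin n) (Fin n) ℂ)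
        + (1 : Matrix (Fin n) (Fin n) ℂ) ⊗ₖ N) = 0)
    {μ ω : ℂ} (hμ : μ ∈ spectrum ℂ M) (hω : ω ∈ spectrum ℂ N) : μ + ω = 0 := by
  obtain ⟨v, hv, hMv⟩ := exists_mulVec_eq_smul_of_mem_spectrum hμ
  obtain ⟨w, hw, hNw⟩ := exists_mulVec_eq_smul_of_mem_spectrum hω
  have hzero := congrArg (· *ᵥ fun p : Fin n × Fin n => v p.1 * w p.2) h
  simp only [← mulVec_mulVec, kroneckerSum_mulVec_mul hMv hNw, mulVec_smul, zero_mulVec] at hzero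
  exact (smul_eq_zero.mp hzero).resolve_right (symProj_mulVec_mul_ne_zero hv hw)

theorem Set.exists_eq_singleton_and_eq_singleton_neg {G : Type*} [AddGroup G] {S T : Set G}
    (hS : S.Nonempty) (hT : T.Nonempty) (h : ∀ a ∈ S, ∀ b ∈ T, a + b = 0) :
    ∃ l, S = {l} ∧ T = {-l} := by
  obtain ⟨a, ha⟩ := hS
  obtain ⟨b, hb⟩ := hT
  have hab : b = -a := eq_neg_of_add_eq_zero_right (h a ha b hb)
  refine ⟨a, Set.eq_singleton_iff_unique_mem.mpr ⟨ha, fun x hx => ?_⟩,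
    Set.eq_singleton_iff_unique_mem.mpr ⟨hab ▸ hb, fun y hy => ?_⟩⟩
  · rw [eq_neg_of_add_eq_zero_left (h x hx b hb), hab, neg_neg]
  · exact eq_neg_of_add_eq_zero_right (h a ha y hy)

/-- If `P₊ (Aᵀ ⊗ 𝟙 + 𝟙 ⊗ Dᵀ) = 0`, then every eigenvalue `μ` of `Aᵀ` and every eigenvalue
`ω` of `Dᵀ` satisfy `μ + ω = 0`; in particular `Aᵀ` has a single eigenvalue `l` and `Dᵀ`
has the single eigenvalue `-l`. -/
theorem spectrum_anti_of_symProj_eq_zero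
    (n : ℕ) (hn : 0 < n) (A D : Matrix (Fin n) (Fin n) ℂ)
    (h : symProj n * (Aᵀ ⊗ₖ (1 : Matrix (Fin n) (Fin n) ℂ)
        + (1 : Matrix (Fin n) (Fin n) ℂ) ⊗ₖ Dᵀ) = 0) :
    (∀ μ ∈ spectrum ℂ Aᵀ, ∀ ω ∈ spectrum ℂ Dᵀ, μ + ω = 0)
      ∧ ∃ l : ℂ, spectrum ℂ Aᵀ = {l} ∧ spectrum ℂ Dᵀ = {-l} := by
  have : NeZero n := ⟨hn.ne'⟩
  have hsum : ∀ μ ∈ spectrum ℂ Aᵀ, ∀ ω ∈ spectrum ℂ Dᵀ, μ + ω = 0 :=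
    fun _ hμ _ hω => add_eq_zero_of_symProj_mul_kroneckerSum_eq_zero h hμ hω
  exact ⟨hsum, Set.exists_eq_singleton_and_eq_singleton_neg
    (spectrum.nonempty_of_isAlgClosed_of_finiteDimensional ℂ Aᵀ)
    (spectrum.nonempty_of_isAlgClosed_of_finiteDimensional ℂ Dᵀ) hsum⟩
end

section
/- Let S be an invertible real 4n×4n matrix written in 2n×2n blocks as S = [[A, B],[C, D]], and suppose A Γ Cᵀ + B Γ Dᵀ = 0 for all symmetric Γ ∈ ℝ^{2n×2n}. If none of A, B, C, D is the zero matrix, then all four blocks A, B, C, D are invertible. -/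
/-!
Write `E = diag(1, 0)` and `Δ M = diag(M, M)`. The hypothesis says that `S (Δ Γ) Sᵀ` is block
diagonal, i.e. commutes with `E`, for every symmetric `Γ`; conjugating by `S`, this reads
`K (Δ Γ) = (Δ Γ) K'` with `K = S⁻¹ E S` and `K' = Sᵀ E Sᵀ⁻¹`. Taking `Γ = 1` gives `K = K'`, so
`K` commutes with `Δ M` for every `M` in the algebra generated by the symmetric matrices, which is
the whole matrix algebra. Hence `A M Cᵀ + B M Dᵀ = 0` for all `M`, i.e. `A ⊗ C + B ⊗ D = 0`.
Since `A, D ≠ 0` this forces `B = μ A` and `C = -μ D`, so `S = diag(A, D) [[1, μ], [-μ, 1]]`,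
and `det S ≠ 0` gives `det A ≠ 0` and `det D ≠ 0`.
-/

open Matrix
open scoped Kronecker

namespace Matrix

section Semiring

variable {R : Type*} [Semiring R] {l m n : Type*} [Fintype m]

theorem fromBlocks_mul_diag_mul_fromBlocks_transpose (A B : Matrix l m R) (C D : Matrix n m R)
    (M : Matrix m m R) :
    fromBlocks A B C D * fromBlocks M 0 0 M * (fromBlocks A B C D)ᵀ =
      fromBlocks (A * M * Aᵀ + B * M * Bᵀ) (A * M * Cᵀ + B * M * Dᵀ)
        (C * M * Aᵀ + D * M * Bᵀ) (C * M * Cᵀ + D * M * Dᵀ) := by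
  simp [fromBlocks_transpose, fromBlocks_multiply]

theorem commute_fromBlocks_one_zero_zero_zero_iff [Fintype n] [DecidableEq m] (P : Matrix m m R)
    (Q : Matrix m n R) (Q' : Matrix n m R) (W : Matrix n n R) :
    Commute (fromBlocks 1 0 0 0) (fromBlocks P Q Q' W) ↔ Q = 0 ∧ Q' = 0 := by
  simp [Commute, SemiconjBy, fromBlocks_multiply, fromBlocks_inj, eq_comm]

end Semiring

variable {R : Type*} [CommRing R] {m : Type*} [Fintype m] [DecidableEq m]

theorem commute_mul_mul_transpose_iff {S : Matrix m m R} (hS : IsUnit S) (E X : Matrix m m R) :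
    Commute E (S * X * Sᵀ) ↔ S⁻¹ * E * S * X = X * (Sᵀ * E * Sᵀ⁻¹) := by
  have hS' : IsUnit S.det := (isUnit_iff_isUnit_det S).mp hS
  have hST' : IsUnit Sᵀ.det := by rwa [det_transpose]
  constructor
  · intro h
    calc S⁻¹ * E * S * X = S⁻¹ * (E * (S * X * Sᵀ)) * Sᵀ⁻¹ := by
          simp only [Matrix.mul_assoc, mul_nonsing_inv _ hST', Matrix.mul_one]
      _ = X * (Sᵀ * E * Sᵀ⁻¹) := by
          rw [h]; simp only [Matrix.mul_assoc, nonsing_inv_mul_cancel_left _ _ hS']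
  · intro h
    calc E * (S * X * Sᵀ) = S * (S⁻¹ * E * S * X) * Sᵀ := by
          simp only [Matrix.mul_assoc, mul_nonsing_inv_cancel_left _ _ hS']
      _ = S * X * Sᵀ * E := by
          rw [h]; simp only [Matrix.mul_assoc, nonsing_inv_mul _ hST', Matrix.mul_one]

theorem adjoin_setOf_isSymm_eq_top :
    Algebra.adjoin R {Γ : Matrix m m R | Γ.IsSymm} = ⊤ := by
  have hsymm {Γ : Matrix m m R} (hΓ : Γ.IsSymm) : Γ ∈ Algebra.adjoin R {Γ | Γ.IsSymm} :=
    Algebra.subset_adjoin hΓ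
  refine eq_top_iff.mpr fun M _ ↦ ?_
  rw [matrix_eq_sum_single M]
  refine Subalgebra.sum_mem _ fun i _ ↦ Subalgebra.sum_mem _ fun j _ ↦ ?_
  rw [show single i j (M i j) = M i j • single i j 1 by simp [smul_single]]
  refine Subalgebra.smul_mem _ ?_ _
  rcases eq_or_ne i j with rfl | hij
  · exact hsymm (by simp [IsSymm, transpose_single])
  · have hprod : single i j (1 : R) = single i i 1 * (single i j 1 + single j i 1) := by
      simp [mul_add, hij]
    rw [hprod]
    exact Subalgebra.mul_mem _ (hsymm (by simp [IsSymm, transpose_single]))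
      (hsymm (by simp [IsSymm, transpose_single, add_comm]))

theorem mul_mul_transpose_add_eq_zero_of_forall_isSymm {A B C D : Matrix m m R}
    (hS : IsUnit (fromBlocks A B C D))
    (h : ∀ Γ : Matrix m m R, Γ.IsSymm → A * Γ * Cᵀ + B * Γ * Dᵀ = 0) (M : Matrix m m R) :
    A * M * Cᵀ + B * M * Dᵀ = 0 := by
  set S := fromBlocks A B C D
  set E : Matrix (m ⊕ m) (m ⊕ m) R := fromBlocks 1 0 0 0
  set K := S⁻¹ * E * S
  set K' := Sᵀ * E * Sᵀ⁻¹
  have hblock (M : Matrix m m R) :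
      K * fromBlocks M 0 0 M = fromBlocks M 0 0 M * K' ↔
        A * M * Cᵀ + B * M * Dᵀ = 0 ∧ C * M * Aᵀ + D * M * Bᵀ = 0 := by
    rw [← commute_mul_mul_transpose_iff hS, fromBlocks_mul_diag_mul_fromBlocks_transpose,
      commute_fromBlocks_one_zero_zero_zero_iff]
  have hsymm {Γ : Matrix m m R} (hΓ : Γ.IsSymm) :
      K * fromBlocks Γ 0 0 Γ = fromBlocks Γ 0 0 Γ * K' := by
    refine (hblock Γ).mpr ⟨h Γ hΓ, ?_⟩
    simpa [Matrix.mul_assoc, hΓ.eq] using congrArg transpose (h Γ hΓ)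
  have hK : K' = K := by simpa [fromBlocks_one] using (hsymm isSymm_one).symm
  have hcomm (M : Matrix m m R) : Commute K (fromBlocks M 0 0 M) := by
    have hM : M ∈ Algebra.adjoin R {Γ : Matrix m m R | Γ.IsSymm} := by
      simp [adjoin_setOf_isSymm_eq_top]
    induction hM using Algebra.adjoin_induction with
    | mem Γ hΓ => exact hK ▸ hsymm hΓ
    | algebraMap r =>
      rw [Algebra.algebraMap_eq_smul_one, ← smul_zero r, ← fromBlocks_smul, fromBlocks_one]
      exact (Commute.one_right K).smul_right r
    | add M N _ _ hM hN => simpa [fromBlocks_add] using hM.add_right hN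
    | mul M N _ _ hM hN => simpa [fromBlocks_multiply] using hM.mul_right hN
  exact ((hblock M).mp (hK ▸ hcomm M)).1

theorem exists_eq_smul_of_kronecker_add_kronecker_eq_zero {K : Type*} [Field K]
    {m n m' n' : Type*} {A B : Matrix m n K} {C D : Matrix m' n' K}
    (h : A ⊗ₖ C + B ⊗ₖ D = 0) (hA : A ≠ 0) (hD : D ≠ 0) :
    ∃ μ : K, B = μ • A ∧ C = (-μ) • D := by
  have hentry (p i q j) : A p i * C q j + B p i * D q j = 0 := by
    simpa using congrFun₂ h (p, q) (i, j)
  obtain ⟨p₀, i₀, hA₀⟩ : ∃ p i, A p i ≠ 0 := by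
    by_contra! h₀; exact hA (Matrix.ext h₀)
  obtain ⟨q₀, j₀, hD₀⟩ : ∃ q j, D q j ≠ 0 := by
    by_contra! h₀; exact hD (Matrix.ext h₀)
  set μ := -(C q₀ j₀ / D q₀ j₀)
  have hB : B = μ • A := by
    ext p i
    have := hentry p i q₀ j₀
    simp only [smul_apply, smul_eq_mul, μ]
    field_simp
    linear_combination this
  refine ⟨μ, hB, ?_⟩
  ext q j
  have := hentry p₀ i₀ q j
  rw [hB, smul_apply, smul_eq_mul] at this
  exact mul_left_cancel₀ hA₀ (by simp only [smul_apply, smul_eq_mul]; linear_combination this)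

theorem isUnit_and_isUnit_of_isUnit_fromBlocks_smul {A D : Matrix m m R} {μ ν : R}
    (hS : IsUnit (fromBlocks A (μ • A) (ν • D) D)) : IsUnit A ∧ IsUnit D := by
  have hfactor : fromBlocks A (μ • A) (ν • D) D =
      fromBlocks A 0 0 D * fromBlocks 1 (μ • 1) (ν • 1) 1 := by
    simp [fromBlocks_multiply]
  rw [isUnit_iff_isUnit_det, hfactor, det_mul, det_fromBlocks_zero₂₁] at hS
  exact ⟨(isUnit_iff_isUnit_det A).mpr (isUnit_of_mul_isUnit_left (isUnit_of_mul_isUnit_left hS)),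
    (isUnit_iff_isUnit_det D).mpr (isUnit_of_mul_isUnit_right (isUnit_of_mul_isUnit_left hS))⟩

end Matrix

theorem blocks_invertible_of_no_block_zero_general
    (n : ℕ) (A B C D : Matrix (Fin (2 * n)) (Fin (2 * n)) ℝ)
    (hS : IsUnit (Matrix.fromBlocks A B C D))
    (hΓ : ∀ Γ : Matrix (Fin (2 * n)) (Fin (2 * n)) ℝ, Γ.IsSymm →
      A * Γ * Cᵀ + B * Γ * Dᵀ = 0)
    (hA : A ≠ 0) (hB : B ≠ 0) (hD : D ≠ 0) :
    IsUnit A ∧ IsUnit B ∧ IsUnit C ∧ IsUnit D := by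
  have hkron : A ⊗ₖ C + B ⊗ₖ D = 0 := by
    ext ⟨p, q⟩ ⟨i, j⟩
    simpa [mul_apply, single_apply, ite_and] using
      congrFun₂ (mul_mul_transpose_add_eq_zero_of_forall_isSymm hS hΓ (single i j 1)) p q
  obtain ⟨μ, rfl, rfl⟩ := exists_eq_smul_of_kronecker_add_kronecker_eq_zero hkron hA hD
  have hμ : μ ≠ 0 := by rintro rfl; simp at hB
  obtain ⟨hA', hD'⟩ := isUnit_and_isUnit_of_isUnit_fromBlocks_smul hS
  exact ⟨hA', by simpa using hA'.smul (Units.mk0 μ hμ),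
    by simpa using hD'.smul (Units.mk0 (-μ) (neg_ne_zero.mpr hμ)), hD'⟩

/-- If `S = [[A,B],[C,D]]` is invertible, `A Γ Cᵀ + B Γ Dᵀ = 0` for all symmetric `Γ`, and
none of the blocks is zero, then all four blocks are invertible. -/
theorem blocks_invertible_of_no_block_zero
    (n : ℕ) (A B C D : Matrix (Fin (2 * n)) (Fin (2 * n)) ℝ)
    (hS : IsUnit (Matrix.fromBlocks A B C D))
    (hΓ : ∀ Γ : Matrix (Fin (2 * n)) (Fin (2 * n)) ℝ, Γ.IsSymm →
      A * Γ * Cᵀ + B * Γ * Dᵀ = 0)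
    (hA : A ≠ 0) (hB : B ≠ 0) (hC : C ≠ 0) (hD : D ≠ 0) :
    IsUnit A ∧ IsUnit B ∧ IsUnit C ∧ IsUnit D :=
  blocks_invertible_of_no_block_zero_general n A B C D hS hΓ hA hB hD
end

section
/- Let S be an invertible real 4n×4n matrix written in 2n×2n blocks as S = [[A, B],[C, D]], and suppose A Γ Cᵀ + B Γ Dᵀ = 0 for all symmetric Γ ∈ ℝ^{2n×2n}. If A = 0, then D = 0 (so S is block anti-diagonal). Analogously, if B = 0 then C = 0; if C = 0 then B = 0; and if D = 0 then A = 0. -/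
/-!
Taking `Γ = 1` gives `A Cᵀ + B Dᵀ = 0`. Once one block of `S` vanishes, one summand drops out, and
invertibility of `S` makes one factor of the other summand invertible (`B`, `A`, `D` or `C` when
`A`, `B`, `C` or `D` vanishes), so its other factor is zero.
-/

open Matrix

namespace Matrix

variable {m α : Type*} [Fintype m] [DecidableEq m] [CommRing α]

theorem isUnit_fromBlocks_zero₁₁ {B C D : Matrix m m α} :
    IsUnit (fromBlocks 0 B C D) ↔ IsUnit B ∧ IsUnit C := by
  rw [← isUnit_submatrix_equiv (Equiv.refl _) (Equiv.sumComm m m)]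
  simp

theorem isUnit_fromBlocks_zero₂₂ {A B C : Matrix m m α} :
    IsUnit (fromBlocks A B C 0) ↔ IsUnit B ∧ IsUnit C := by
  rw [← isUnit_submatrix_equiv (Equiv.refl _) (Equiv.sumComm m m)]
  simp

end Matrix

/-- If `S = [[A,B],[C,D]]` is invertible and `A Γ Cᵀ + B Γ Dᵀ = 0` for all symmetric `Γ`,
then `A = 0 → D = 0`, `B = 0 → C = 0`, `C = 0 → B = 0` and `D = 0 → A = 0`. -/
theorem block_zero_implications
    (n : ℕ) (A B C D : Matrix (Fin (2 * n)) (Fin (2 * n)) ℝ)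
    (hS : IsUnit (Matrix.fromBlocks A B C D))
    (hΓ : ∀ Γ : Matrix (Fin (2 * n)) (Fin (2 * n)) ℝ, Γ.IsSymm →
      A * Γ * Cᵀ + B * Γ * Dᵀ = 0) :
    (A = 0 → D = 0) ∧ (B = 0 → C = 0) ∧ (C = 0 → B = 0) ∧ (D = 0 → A = 0) := by
  have hsum : A * Cᵀ + B * Dᵀ = 0 := by simpa using hΓ 1 isSymm_one
  refine ⟨fun hA => ?_, fun hB => ?_, fun hC => ?_, fun hD => ?_⟩
  · subst hA
    have hBu : IsUnit B := (isUnit_fromBlocks_zero₁₁.mp hS).1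
    rwa [zero_mul, zero_add, hBu.mul_right_eq_zero, transpose_eq_zero] at hsum
  · subst hB
    have hAu : IsUnit A := (isUnit_fromBlocks_zero₁₂.mp hS).1
    rwa [zero_mul, add_zero, hAu.mul_right_eq_zero, transpose_eq_zero] at hsum
  · subst hC
    have hDu : IsUnit Dᵀ := (isUnit_transpose D).mpr (isUnit_fromBlocks_zero₂₁.mp hS).2
    rwa [transpose_zero, mul_zero, zero_add, hDu.mul_left_eq_zero] at hsum
  · subst hD
    have hCu : IsUnit Cᵀ := (isUnit_transpose C).mpr (isUnit_fromBlocks_zero₂₂.mp hS).2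
    rwa [transpose_zero, mul_zero, add_zero, hCu.mul_left_eq_zero] at hsum
end

section
/- Let S ∈ Sp(4n, ℝ) (i.e., S σ Sᵀ = σ with σ the standard symplectic form on ℝ^{4n}) satisfy: for all 2n×2n real covariance matrices Γ₁, Γ₂ (symmetric matrices with Γⱼ + iσ₂ₙ ≥ 0), the matrix S (Γ₁ ⊕ Γ₂) Sᵀ is 2n×2n block diagonal. Then S is either block diagonal, S = [[A,0],[0,D]], or block anti-diagonal, S = [[0,B],[C,0]], with A, B, C, D ∈ Sp(2n, ℝ). -/
/-!
The off-diagonal block of `S (Γ₁ ⊕ Γ₂) Sᵀ` for `S = [[A, B], [C, D]]` is `A Γ₁ Cᵀ + B Γ₂ Dᵀ`.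
Since `1 + iσ ≥ 0`, both `1` and `1 + v vᵀ` are covariance matrices, and comparing `Γ₁ = 1` with
`Γ₁ = 1 + v vᵀ` gives `(A v) (C v)ᵀ = 0` for every `v`. So every vector lies in `ker A ∪ ker C`,
and as a vector space is not the union of two proper subspaces, `A = 0` or `C = 0`; likewise
`B = 0` or `D = 0`. The diagonal blocks of `S (σ ⊕ σ) Sᵀ = σ ⊕ σ` read
`A σ Aᵀ + B σ Bᵀ = σ = C σ Cᵀ + D σ Dᵀ`, which excludes `A = B = 0` and `C = D = 0` and makes the
two surviving blocks symplectic.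
-/

open Matrix ComplexOrder

/-- The standard symplectic form `⊕ᵢ [[0,1],[-1,0]]` on `ℝ^{2m}`. -/
def Jmat (m : ℕ) : Matrix (Fin (2 * m)) (Fin (2 * m)) ℝ :=
  Matrix.of fun i j =>
    if (i : ℕ) + 1 = (j : ℕ) ∧ (i : ℕ) % 2 = 0 then 1
    else if (j : ℕ) + 1 = (i : ℕ) ∧ (j : ℕ) % 2 = 0 then -1 else 0

/-- `S` is a symplectic matrix: `S σ Sᵀ = σ`. -/
def IsSymplectic (m : ℕ) (S : Matrix (Fin (2 * m)) (Fin (2 * m)) ℝ) : Prop :=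
  S * Jmat m * Sᵀ = Jmat m

/-- A covariance matrix: real symmetric `Γ` with `Γ + iσ ≥ 0`. -/
def IsCovMat (n : ℕ) (Γ : Matrix (Fin (2 * n)) (Fin (2 * n)) ℝ) : Prop :=
  Γ.IsSymm ∧
    (Γ.map (Complex.ofReal) + Complex.I • (Jmat n).map (Complex.ofReal)).PosSemidef

/-- The symplectic form on the doubled phase space, in block ordering. -/
def bigJ (n : ℕ) :
    Matrix (Fin (2 * n) ⊕ Fin (2 * n)) (Fin (2 * n) ⊕ Fin (2 * n)) ℝ :=
  Matrix.fromBlocks (Jmat n) 0 0 (Jmat n)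

theorem Jmat_transpose (m : ℕ) : (Jmat m)ᵀ = -Jmat m := by
  ext i j
  simp only [transpose_apply, Jmat, of_apply, Matrix.neg_apply]
  split_ifs <;> first | omega | norm_num

theorem Jmat_mul_self (m : ℕ) : Jmat m * Jmat m = -1 := by
  ext i j
  have hi := i.isLt
  -- the only nonzero entry in row `i` of `Jmat m` sits in column `i xor 1`
  let k : Fin (2 * m) := ⟨if (i : ℕ) % 2 = 0 then i + 1 else i - 1, by split_ifs <;> omega⟩
  rw [mul_apply, Finset.sum_eq_single k]
  · simp only [Jmat, k, of_apply, Matrix.neg_apply, Matrix.one_apply, Fin.ext_iff]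
    split_ifs <;> first | omega | norm_num
  · intro l _ hl
    have hl' : (l : ℕ) ≠ k := fun h => hl (Fin.ext h)
    simp only [Jmat, k, of_apply] at hl' ⊢
    split_ifs at hl' ⊢ <;> first | omega | norm_num
  · simp

theorem Jmat_ne_zero {m : ℕ} (hm : 0 < m) : Jmat m ≠ 0 := fun h => by
  simpa [Jmat] using congr_fun₂ h ⟨0, by omega⟩ ⟨1, by omega⟩

theorem posSemidef_one_add_I_smul_map_ofReal {ι : Type*} [Fintype ι] [DecidableEq ι]
    {J : Matrix ι ι ℝ} (hJt : Jᵀ = -J) (hJJ : J * J = -1) :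
    (1 + Complex.I • J.map Complex.ofReal).PosSemidef := by
  set Jc := J.map Complex.ofReal
  have hJc : Jcᴴ = -Jc := by
    ext i j
    simpa [Jc] using congr_arg Complex.ofReal (congr_fun₂ hJt i j)
  have hJcJc : Jc * Jc = -1 := by
    have := map_mul Complex.ofRealHom.mapMatrix J J
    rw [hJJ, map_neg, map_one] at this
    exact this.symm
  set M := 1 + Complex.I • Jc
  have hM : Mᴴ = M := by
    simp [M, hJc, Complex.conj_I]
  have hMM : Mᴴ * M = (2 : ℝ) • M := by
    rw [hM]
    simp only [M, add_mul, mul_add, smul_mul_smul_comm, hJcJc, Complex.I_mul_I, one_mul, mul_one,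
      neg_smul_neg, one_smul, two_smul]
    abel
  have : M = (1 / 2 : ℝ) • (Mᴴ * M) := by
    rw [hMM, smul_smul]; norm_num
  rw [this]
  exact (posSemidef_conjTranspose_mul_self M).smul (by norm_num)

theorem isCovMat_one (n : ℕ) : IsCovMat n 1 :=
  ⟨isSymm_one, by
    simpa using posSemidef_one_add_I_smul_map_ofReal (Jmat_transpose n) (Jmat_mul_self n)⟩

theorem IsCovMat.add_vecMulVec_self {n : ℕ} {Γ : Matrix (Fin (2 * n)) (Fin (2 * n)) ℝ}
    (hΓ : IsCovMat n Γ) (v : Fin (2 * n) → ℝ) : IsCovMat n (Γ + vecMulVec v v) := by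
  refine ⟨hΓ.1.add (transpose_vecMulVec v v), ?_⟩
  have hv : (vecMulVec v v).map Complex.ofReal
      = vecMulVec (fun i => (v i : ℂ)) (star fun i => (v i : ℂ)) := by
    ext i j
    simp [vecMulVec_apply]
  rw [Matrix.map_add _ Complex.ofReal_add, hv, add_right_comm]
  exact hΓ.2.add (posSemidef_vecMulVec_self_star _)

section BlockAlgebra

variable {l m n o R : Type*} [Fintype m] [Fintype n]

theorem mul_vecMulVec_mul_transpose [CommSemiring R] (A : Matrix l m R) (C : Matrix o m R)
    (v : m → R) : A * vecMulVec v v * Cᵀ = vecMulVec (A *ᵥ v) (C *ᵥ v) := by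
  rw [mul_vecMulVec, vecMulVec_mul, vecMul_transpose]

theorem eq_zero_or_eq_zero_of_forall_mulVec [Semiring R] {A : Matrix l m R} {C : Matrix o m R}
    (h : ∀ v, A *ᵥ v = 0 ∨ C *ᵥ v = 0) : A = 0 ∨ C = 0 := by
  simp only [ext_iff_mulVec, zero_mulVec]
  by_contra! hAC
  obtain ⟨⟨u, hu⟩, ⟨w, hw⟩⟩ := hAC
  rcases h (u + w) with huw | huw
  · exact hu (by rwa [mulVec_add, (h w).resolve_right hw, add_zero] at huw)
  · exact hw (by rwa [mulVec_add, (h u).resolve_left hu, zero_add] at huw)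

theorem eq_zero_or_eq_zero_of_forall_mul_vecMulVec_mul_transpose [CommSemiring R]
    [NoZeroDivisors R] {A C : Matrix l m R}
    (h : ∀ v : m → R, A * vecMulVec v v * Cᵀ = 0) : A = 0 ∨ C = 0 :=
  eq_zero_or_eq_zero_of_forall_mulVec fun v =>
    vecMulVec_eq_zero.mp <| (mul_vecMulVec_mul_transpose A C v).symm.trans (h v)

theorem fromBlocks_mul_fromBlocks_zero_zero_mul_transpose [Semiring R]
    (A : Matrix l m R) (B : Matrix l n R) (C : Matrix o m R) (D : Matrix o n R)
    (X : Matrix m m R) (Y : Matrix n n R) :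
    fromBlocks A B C D * fromBlocks X 0 0 Y * (fromBlocks A B C D)ᵀ =
      fromBlocks (A * X * Aᵀ + B * Y * Bᵀ) (A * X * Cᵀ + B * Y * Dᵀ)
        (C * X * Aᵀ + D * Y * Bᵀ) (C * X * Cᵀ + D * Y * Dᵀ) := by
  simp [fromBlocks_transpose, fromBlocks_multiply]

end BlockAlgebra

theorem mul_vecMulVec_mul_transpose_eq_zero_of_forall_isCovMat {n : ℕ}
    {A B C D : Matrix (Fin (2 * n)) (Fin (2 * n)) ℝ}
    (h : ∀ Γ₁ Γ₂, IsCovMat n Γ₁ → IsCovMat n Γ₂ → A * Γ₁ * Cᵀ + B * Γ₂ * Dᵀ = 0)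
    (v : Fin (2 * n) → ℝ) : A * vecMulVec v v * Cᵀ = 0 := by
  have h₀ := h 1 1 (isCovMat_one n) (isCovMat_one n)
  have h₁ := h _ 1 ((isCovMat_one n).add_vecMulVec_self v) (isCovMat_one n)
  rwa [mul_add, add_mul, add_right_comm, h₀, zero_add] at h₁

/-- If a symplectic `S` maps every block-diagonal pair `Γ₁ ⊕ Γ₂` of covariance matrices to a
block-diagonal matrix, then `S` is block diagonal or block anti-diagonal with symplectic
blocks. -/
theorem symplectic_preserving_block_diagonal
    (n : ℕ) (hn : 0 < n)
    (S : Matrix (Fin (2 * n) ⊕ Fin (2 * n)) (Fin (2 * n) ⊕ Fin (2 * n)) ℝ)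
    (hS : S * bigJ n * Sᵀ = bigJ n)
    (h : ∀ Γ₁ Γ₂ : Matrix (Fin (2 * n)) (Fin (2 * n)) ℝ, IsCovMat n Γ₁ → IsCovMat n Γ₂ →
      (S * Matrix.fromBlocks Γ₁ 0 0 Γ₂ * Sᵀ).toBlocks₁₂ = 0 ∧
      (S * Matrix.fromBlocks Γ₁ 0 0 Γ₂ * Sᵀ).toBlocks₂₁ = 0) :
    (∃ A D, IsSymplectic n A ∧ IsSymplectic n D ∧ S = Matrix.fromBlocks A 0 0 D) ∨
    (∃ B C, IsSymplectic n B ∧ IsSymplectic n C ∧ S = Matrix.fromBlocks 0 B C 0) := by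
  obtain ⟨A, B, C, D, rfl⟩ : ∃ A B C D, S = fromBlocks A B C D :=
    ⟨_, _, _, _, (fromBlocks_toBlocks S).symm⟩
  simp only [fromBlocks_mul_fromBlocks_zero_zero_mul_transpose, toBlocks_fromBlocks₁₂] at h
  rw [bigJ, fromBlocks_mul_fromBlocks_zero_zero_mul_transpose, fromBlocks_inj] at hS
  obtain ⟨hAB, -, -, hCD⟩ := hS
  have hAC : A = 0 ∨ C = 0 := eq_zero_or_eq_zero_of_forall_mul_vecMulVec_mul_transpose <|
    mul_vecMulVec_mul_transpose_eq_zero_of_forall_isCovMat fun Γ₁ Γ₂ h₁ h₂ => (h Γ₁ Γ₂ h₁ h₂).1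
  have hBD : B = 0 ∨ D = 0 := eq_zero_or_eq_zero_of_forall_mul_vecMulVec_mul_transpose <|
    mul_vecMulVec_mul_transpose_eq_zero_of_forall_isCovMat fun Γ₂ Γ₁ h₂ h₁ =>
      (add_comm _ _).trans (h Γ₁ Γ₂ h₁ h₂).1
  rcases hAC with rfl | rfl <;> rcases hBD with rfl | rfl <;>
    simp only [zero_mul, zero_add, add_zero] at hAB hCD
  · exact absurd hAB.symm (Jmat_ne_zero hn)
  · exact Or.inr ⟨B, C, hAB, hCD, rfl⟩
  · exact Or.inl ⟨A, D, hAB, hCD, rfl⟩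
  · exact absurd hCD.symm (Jmat_ne_zero hn)
end

section
/- Classical Darmois–Skitovich (functional equation form, n = 2, equal coefficients): let φ₁, φ₂: ℝ → ℂ be characteristic functions of real random variables with finite second moments, and fix θ with θ ≠ mπ/2 for all integers m. If for all s, t ∈ ℝ, φ₁(cos θ · t + sin θ · s) φ₂(cos θ · s − sin θ · t) = φ₁(cos θ · t) φ₁(sin θ · s) φ₂(cos θ · s) φ₂(−sin θ · t), then φ₁ and φ₂ are Gaussian characteristic functions with the same variance: φⱼ(t) = exp(−v t²/2 + i t dⱼ) for some v ≥ 0 and real d₁, d₂. -/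
/-!
With `a = cos θ` and `b = sin θ`, both nonzero and `a² + b² = 1`, the substitution
`(s, t) = (b r, a r)` writes `φ₁ r` as a product of values of `φ₁, φ₂` at points of modulus at
most `max (a², b²) |r| < |r|`; since both functions are continuous and equal `1` at `0`, neither
vanishes. The characteristic functions are `C¹` (finite moments), so the logarithmic derivatives
`uⱼ = φⱼ' / φⱼ` are continuous. Differentiating the equation in `t`, and its image under the
symmetry `(φ₁, φ₂, b, s, t) ↦ (φ₂, φ₁, -b, t, s)`, gives two linear relations whose combination
is a Pexider equation `u₁ (x + y) = F x + G y`; hence `u₁` and likewise `u₂` are affine, with a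
common slope `c`, and `φⱼ t = exp (c t² / 2 + mⱼ t)`. Finally `φ (-t) = conj (φ t)` forces `c`
real and `mⱼ` imaginary, and `‖φ‖ ≤ 1` forces `c ≤ 0`.
-/

open MeasureTheory Complex
open Filter Topology ComplexConjugate

lemma logDeriv_comp_mul_add (f : ℝ → ℂ) (a c x : ℝ) :
    logDeriv (fun y => f (a * y + c)) x = a * logDeriv f (a * x + c) := by
  have hderiv : deriv (fun y => f (a * y + c)) x = a • deriv f (a * x + c) := by
    rw [deriv_comp_mul_left a (fun y => f (y + c)) x, deriv_comp_add_const]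
  rw [logDeriv_apply, logDeriv_apply, hderiv, Complex.real_smul, mul_div_assoc]

lemma logDeriv_exp_quadratic (c m : ℂ) (t : ℝ) :
    logDeriv (fun t : ℝ => exp (c * ((t : ℂ) ^ 2 / 2) + m * t)) t = m + c * t := by
  have hq : HasDerivAt (fun t : ℝ => c * ((t : ℂ) ^ 2 / 2) + m * t) (m + c * t) t := by
    have hz : HasDerivAt (fun y : ℝ => (y : ℂ)) 1 t := (hasDerivAt_id t).ofReal_comp
    refine ((((hz.fun_pow 2).div_const 2).const_mul c).fun_add (hz.const_mul m)).congr_deriv ?_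
    push_cast
    ring
  rw [logDeriv_apply, hq.cexp.deriv, mul_div_cancel_left₀ _ (exp_ne_zero _)]

lemma eq_exp_of_logDeriv_eq {φ : ℝ → ℂ} {c m : ℂ} (hd : Differentiable ℝ φ)
    (hn : ∀ t, φ t ≠ 0) (h0 : φ 0 = 1) (h : ∀ t, logDeriv φ t = m + c * t) (t : ℝ) :
    φ t = exp (c * ((t : ℂ) ^ 2 / 2) + m * t) := by
  obtain ⟨z, -, hz⟩ := (logDeriv_eqOn_iff hd.differentiableOn (by fun_prop) isOpen_univ
    isPreconnected_univ (fun t _ => exp_ne_zero _) (fun t _ => hn t)).1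
    (fun t _ => (h t).trans (logDeriv_exp_quadratic c m t).symm)
  have hz1 : z = 1 := by simpa [h0] using (hz (Set.mem_univ 0)).symm
  simpa [hz1] using hz (Set.mem_univ t)

lemma affine_of_pexider {E : Type*} [NormedAddCommGroup E] [NormedSpace ℝ E] {u F G : ℝ → E}
    (hu : Continuous u) (h : ∀ x y, u (x + y) = F x + G y) (x : ℝ) :
    u x = u 0 + x • (u 1 - u 0) := by
  let w : ℝ →+ E := AddMonoidHom.mk' (fun x => u x - u 0) fun x y => by
    have hx := h x 0
    have hy := h 0 y
    have h00 := h 0 0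
    simp only [add_zero, zero_add] at hx hy h00
    rw [h, hx, hy, h00]
    abel
  have := map_real_smul w (hu.sub continuous_const) x 1
  simp only [smul_eq_mul, mul_one] at this
  rw [← sub_eq_iff_eq_add']
  exact this

lemma forall_of_eventually_nhds_zero_of_contract {P : ℝ → Prop} {c : ℝ} (hc₀ : 0 ≤ c)
    (hc₁ : c < 1) (h₀ : ∀ᶠ x in 𝓝 0, P x) (hstep : ∀ x, (∀ y, |y| ≤ c * |x| → P y) → P x)
    (x : ℝ) : P x := by
  obtain ⟨δ, hδ, hP⟩ := Metric.eventually_nhds_iff.1 h₀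
  have hpow : ∀ n : ℕ, ∀ x, c ^ n * |x| < δ → P x := by
    intro n
    induction n with
    | zero => exact fun x hx => hP (by simpa using hx)
    | succ n ih =>
      refine fun x hx => hstep x fun y hy => ih y ?_
      calc c ^ n * |y| ≤ c ^ n * (c * |x|) := by gcongr
        _ = c ^ (n + 1) * |x| := by ring
        _ < δ := hx
  obtain ⟨n, hn⟩ := ((tendsto_pow_atTop_nhds_zero_of_lt_one hc₀ hc₁).mul_const |x|).eventually
    (gt_mem_nhds (by rwa [zero_mul])) |>.exists
  exact hpow n x hn

def DarmoisSkitovichEq (a b : ℝ) (φ₁ φ₂ : ℝ → ℂ) : Prop :=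
  ∀ s t : ℝ, φ₁ (a * t + b * s) * φ₂ (a * s - b * t) =
    φ₁ (a * t) * φ₁ (b * s) * φ₂ (a * s) * φ₂ (-(b * t))

namespace DarmoisSkitovichEq

variable {a b : ℝ} {φ₁ φ₂ : ℝ → ℂ}

lemma swap (h : DarmoisSkitovichEq a b φ₁ φ₂) : DarmoisSkitovichEq a (-b) φ₂ φ₁ := by
  intro s t
  rw [show a * t + -b * s = a * t - b * s by ring, show a * s - -b * t = a * s + b * t by ring,
    show -b * s = -(b * s) by ring, show -(-b * t) = b * t by ring]
  linear_combination h t s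

lemma apply_eq_mul (h : DarmoisSkitovichEq a b φ₁ φ₂) (hab : a ^ 2 + b ^ 2 = 1) (h₂ : φ₂ 0 = 1)
    (r : ℝ) : φ₁ r = φ₁ (a ^ 2 * r) * φ₁ (b ^ 2 * r) * φ₂ (a * b * r) * φ₂ (-(a * b * r)) := by
  have e := h (b * r) (a * r)
  rw [show a * (a * r) + b * (b * r) = r by linear_combination r * hab,
    show a * (b * r) - b * (a * r) = 0 by ring, h₂, mul_one] at e
  rw [e]
  ring_nf

lemma ne_zero (h : DarmoisSkitovichEq a b φ₁ φ₂) (ha : a ≠ 0) (hb : b ≠ 0)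
    (hab : a ^ 2 + b ^ 2 = 1) (hφ₁ : Continuous φ₁) (hφ₂ : Continuous φ₂) (h₁ : φ₁ 0 = 1)
    (h₂ : φ₂ 0 = 1) (x : ℝ) : φ₁ x ≠ 0 ∧ φ₂ x ≠ 0 := by
  set c := max (a ^ 2) (b ^ 2)
  have ha2 : a ^ 2 ≤ c := le_max_left _ _
  have hb2 : b ^ 2 ≤ c := le_max_right _ _
  have hab' : |a * b| ≤ c := by
    have := two_mul_le_add_sq |a| |b|
    rw [sq_abs, sq_abs] at this
    rw [abs_mul]
    linarith
  have hc_lt : c < 1 :=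
    max_lt (by linarith [sq_pos_of_ne_zero hb]) (by linarith [sq_pos_of_ne_zero ha])
  have h0 : ∀ᶠ y in 𝓝 0, φ₁ y ≠ 0 ∧ φ₂ y ≠ 0 :=
    (hφ₁.continuousAt.eventually_ne (by simp [h₁])).and
      (hφ₂.continuousAt.eventually_ne (by simp [h₂]))
  refine forall_of_eventually_nhds_zero_of_contract (sq_nonneg a |>.trans ha2) hc_lt h0
    (fun x hx => ?_) x
  have key : ∀ α : ℝ, |α| ≤ c → φ₁ (α * x) ≠ 0 ∧ φ₂ (α * x) ≠ 0 := fun α hα =>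
    hx _ (by rw [abs_mul]; gcongr)
  have hsq : ∀ α : ℝ, α ^ 2 ≤ c → |α ^ 2| ≤ c := fun α h => by rwa [abs_of_nonneg (sq_nonneg α)]
  have hneg : |-(a * b)| ≤ c := by rwa [abs_neg]
  constructor
  · rw [h.apply_eq_mul hab h₂, ← neg_mul]
    exact mul_ne_zero (mul_ne_zero (mul_ne_zero (key _ (hsq a ha2)).1 (key _ (hsq b hb2)).1)
      (key _ hab').2) (key _ hneg).2
  · rw [h.swap.apply_eq_mul (by rwa [neg_sq]) h₁, ← neg_mul, neg_sq]
    exact mul_ne_zero (mul_ne_zero (mul_ne_zero (key _ (hsq a ha2)).2 (key _ (hsq b hb2)).2)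
      (key _ (by rwa [mul_neg, abs_neg])).1) (key _ (by rwa [mul_neg, neg_neg])).1

lemma logDeriv_eq (h : DarmoisSkitovichEq a b φ₁ φ₂) (hd₁ : Differentiable ℝ φ₁)
    (hd₂ : Differentiable ℝ φ₂) (hn₁ : ∀ x, φ₁ x ≠ 0) (hn₂ : ∀ x, φ₂ x ≠ 0) (s t : ℝ) :
    a * logDeriv φ₁ (a * t + b * s) - b * logDeriv φ₂ (a * s - b * t) =
      a * logDeriv φ₁ (a * t) - b * logDeriv φ₂ (-(b * t)) := by
  have hfun : (fun x => φ₁ (a * x + b * s) * φ₂ (-b * x + a * s)) =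
      fun x => φ₁ (a * x + 0) * (φ₁ (b * s) * φ₂ (a * s)) * φ₂ (-b * x + 0) := funext fun x => by
    rw [show -b * x + a * s = a * s - b * x by ring, h s x, add_zero, add_zero, neg_mul]
    ring
  have e := congrArg (logDeriv · t) hfun
  rw [logDeriv_mul (f := fun x => φ₁ (a * x + b * s)) (g := fun x => φ₂ (-b * x + a * s)) t
      (hn₁ _) (hn₂ _) (by fun_prop) (by fun_prop),
    logDeriv_mul (f := fun x => φ₁ (a * x + 0) * (φ₁ (b * s) * φ₂ (a * s)))
      (g := fun x => φ₂ (-b * x + 0)) t (mul_ne_zero (hn₁ _) (mul_ne_zero (hn₁ _) (hn₂ _)))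
      (hn₂ _) (by fun_prop) (by fun_prop),
    logDeriv_mul_const t _ (mul_ne_zero (hn₁ _) (hn₂ _)), logDeriv_comp_mul_add,
    logDeriv_comp_mul_add, logDeriv_comp_mul_add, logDeriv_comp_mul_add] at e
  rw [add_zero, add_zero, show -b * t + a * s = a * s - b * t by ring, neg_mul] at e
  push_cast at e
  linear_combination e

lemma logDeriv_affine (h : DarmoisSkitovichEq a b φ₁ φ₂) (ha : a ≠ 0) (hb : b ≠ 0)
    (hab : a ^ 2 + b ^ 2 = 1) (hd₁ : ContDiff ℝ 1 φ₁) (hd₂ : Differentiable ℝ φ₂)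
    (hn₁ : ∀ x, φ₁ x ≠ 0) (hn₂ : ∀ x, φ₂ x ≠ 0) (x : ℝ) :
    logDeriv φ₁ x = logDeriv φ₁ 0 + x * (logDeriv φ₁ 1 - logDeriv φ₁ 0) := by
  have hd₁' : Differentiable ℝ φ₁ := hd₁.differentiable one_ne_zero
  have hu : Continuous (logDeriv φ₁) := (hd₁.continuous_deriv le_rfl).div hd₁.continuous hn₁
  rw [affine_of_pexider hu
    (F := fun x => a ^ 2 * logDeriv φ₁ x - a * b * logDeriv φ₂ (-(b * (x / a))))
    (G := fun y => b ^ 2 * logDeriv φ₁ y + a * b * logDeriv φ₂ (a * (y / b))) ?_ x,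
    Complex.real_smul]
  intro x y
  have e₁ := h.logDeriv_eq hd₁' hd₂ hn₁ hn₂ (y / b) (x / a)
  have e₂ := h.swap.logDeriv_eq hd₂ hd₁' hn₂ hn₁ (x / a) (y / b)
  rw [show a * (y / b) + -b * (x / a) = a * (y / b) - b * (x / a) by ring,
    show a * (x / a) - -b * (y / b) = a * (x / a) + b * (y / b) by ring, neg_mul, neg_neg] at e₂
  rw [mul_div_cancel₀ x ha, mul_div_cancel₀ y hb] at e₁ e₂
  have habC : (a : ℂ) ^ 2 + (b : ℂ) ^ 2 = 1 := by exact_mod_cast hab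
  push_cast at e₂
  linear_combination a * e₁ + b * e₂ - logDeriv φ₁ (x + y) * habC

theorem exists_eq_exp (h : DarmoisSkitovichEq a b φ₁ φ₂) (ha : a ≠ 0) (hb : b ≠ 0)
    (hab : a ^ 2 + b ^ 2 = 1) (hd₁ : ContDiff ℝ 1 φ₁) (hd₂ : ContDiff ℝ 1 φ₂) (h₁ : φ₁ 0 = 1)
    (h₂ : φ₂ 0 = 1) :
    ∃ c m₁ m₂ : ℂ, ∀ t : ℝ, φ₁ t = exp (c * ((t : ℂ) ^ 2 / 2) + m₁ * t) ∧
      φ₂ t = exp (c * ((t : ℂ) ^ 2 / 2) + m₂ * t) := by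
  have hn := h.ne_zero ha hb hab hd₁.continuous hd₂.continuous h₁ h₂
  have hn₁ x := (hn x).1
  have hn₂ x := (hn x).2
  have hd₁' := hd₁.differentiable one_ne_zero
  have hd₂' := hd₂.differentiable one_ne_zero
  have aff₁ := h.logDeriv_affine ha hb hab hd₁ hd₂' hn₁ hn₂
  have aff₂ := h.swap.logDeriv_affine ha (neg_ne_zero.2 hb) (by rwa [neg_sq]) hd₂ hd₁' hn₂ hn₁
  have e := h.logDeriv_eq hd₁' hd₂' hn₁ hn₂ 1 0
  set u₁ := logDeriv φ₁
  set u₂ := logDeriv φ₂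
  have hslope : u₁ 1 - u₁ 0 = u₂ 1 - u₂ 0 := by
    simp only [mul_zero, mul_one, zero_add, sub_zero, neg_zero] at e
    rw [aff₁ b, aff₂ a] at e
    refine mul_left_cancel₀ (mul_ne_zero (ofReal_ne_zero.2 ha) (ofReal_ne_zero.2 hb)) ?_
    linear_combination e
  refine ⟨u₁ 1 - u₁ 0, u₁ 0, u₂ 0, fun t => ⟨?_, ?_⟩⟩
  · exact eq_exp_of_logDeriv_eq hd₁' hn₁ h₁ (fun t => (aff₁ t).trans (by ring)) t
  · exact eq_exp_of_logDeriv_eq hd₂' hn₂ h₂ (fun t => (aff₂ t).trans (by rw [hslope]; ring)) t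

end DarmoisSkitovichEq

lemma cos_ne_zero_and_sin_ne_zero {θ : ℝ} (hθ : ∀ m : ℤ, θ ≠ m * (Real.pi / 2)) :
    Real.cos θ ≠ 0 ∧ Real.sin θ ≠ 0 := by
  have h : Real.sin (2 * θ) ≠ 0 := Real.sin_ne_zero_iff.2 fun n hn => hθ n (by linarith)
  rw [Real.sin_two_mul] at h
  exact ⟨right_ne_zero_of_mul h, right_ne_zero_of_mul (left_ne_zero_of_mul h)⟩

lemma exists_eq_charFun_of_memLp {Ω : Type*} [MeasurableSpace Ω] {P : Measure Ω}
    [IsProbabilityMeasure P] {X : Ω → ℝ} (hX : MemLp X 2 P) {φ : ℝ → ℂ}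
    (hφ : ∀ t : ℝ, φ t = ∫ ω, exp (I * t * X ω) ∂P) :
    ∃ μ : Measure ℝ, IsProbabilityMeasure μ ∧ MemLp id 2 μ ∧ φ = charFun μ := by
  have hXm : AEMeasurable X P := hX.1.aemeasurable
  refine ⟨P.map X, Measure.isProbabilityMeasure_map hXm,
    (memLp_map_measure_iff aestronglyMeasurable_id hXm).2 hX, funext fun t => ?_⟩
  rw [hφ, charFun_apply_real, integral_map hXm (by fun_prop)]
  simp_rw [mul_comm I, mul_right_comm (t : ℂ)]

lemma logDeriv_charFun_neg (μ : Measure ℝ) (t : ℝ) :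
    logDeriv (charFun μ) (-t) = -conj (logDeriv (charFun μ) t) := by
  have hderiv : deriv (charFun μ) (-t) = -conj (deriv (charFun μ) t) := by
    have e := deriv_comp_neg (charFun μ) t
    simp_rw [charFun_neg] at e
    rw [← neg_eq_iff_eq_neg, ← e]
    exact deriv.star
  rw [logDeriv_apply, logDeriv_apply, hderiv, charFun_neg, map_div₀, neg_div]

lemma exists_real_of_charFun_eq_exp {μ : Measure ℝ} [IsProbabilityMeasure μ] {c m : ℂ}
    (h : ∀ t : ℝ, charFun μ t = exp (c * ((t : ℂ) ^ 2 / 2) + m * t)) :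
    ∃ v d : ℝ, 0 ≤ v ∧ c = -v ∧ m = I * d := by
  have hu : ∀ t, logDeriv (charFun μ) t = m + c * t := by
    rw [funext h]
    exact logDeriv_exp_quadratic c m
  have e₀ := logDeriv_charFun_neg μ 0
  have e₁ := logDeriv_charFun_neg μ 1
  have hbound := norm_charFun_le_one (μ := μ) 1
  rw [neg_zero, hu] at e₀
  rw [hu, hu] at e₁
  rw [h, norm_exp, Real.exp_le_one_iff] at hbound
  have hm : m.re = 0 := by linarith [show m.re = -m.re by simpa using congrArg re e₀]
  have hc : c.im = 0 := by linarith [show m.im + -c.im = c.im + m.im by simpa using congrArg im e₁]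
  have hc' : c.re ≤ 0 := by linarith [show c.re * 2⁻¹ ≤ 0 by simpa [hm] using hbound]
  exact ⟨-c.re, m.im, neg_nonneg.2 hc', Complex.ext (by simp) (by simp [hc]),
    Complex.ext (by simp [hm]) (by simp)⟩

/-- Classical Darmois–Skitovich theorem in functional-equation form (two variables, beam
splitter coefficients): if the characteristic functions of two random variables with finite
second moments satisfy the factorization identity for a nontrivial angle `θ`, then both are
Gaussian characteristic functions with the same variance. -/
theorem classical_DS_functional_equation
    {Ω : Type*} [MeasureSpace Ω] [IsProbabilityMeasure (volume : Measure Ω)]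
    (X₁ X₂ : Ω → ℝ) (hX₁ : MemLp X₁ 2) (hX₂ : MemLp X₂ 2)
    (θ : ℝ) (hθ : ∀ m : ℤ, θ ≠ m * (Real.pi / 2))
    (φ₁ φ₂ : ℝ → ℂ)
    (hφ₁ : ∀ t : ℝ, φ₁ t = ∫ ω, Complex.exp (Complex.I * t * X₁ ω))
    (hφ₂ : ∀ t : ℝ, φ₂ t = ∫ ω, Complex.exp (Complex.I * t * X₂ ω))
    (hfe : ∀ s t : ℝ,
      φ₁ (Real.cos θ * t + Real.sin θ * s) * φ₂ (Real.cos θ * s - Real.sin θ * t) =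
        φ₁ (Real.cos θ * t) * φ₁ (Real.sin θ * s) *
        φ₂ (Real.cos θ * s) * φ₂ (-(Real.sin θ * t))) :
    ∃ v : ℝ, 0 ≤ v ∧ ∃ d₁ d₂ : ℝ,
      (∀ t : ℝ, φ₁ t = Complex.exp ((- (v * t ^ 2) / 2 : ℝ) + Complex.I * t * d₁)) ∧
      (∀ t : ℝ, φ₂ t = Complex.exp ((- (v * t ^ 2) / 2 : ℝ) + Complex.I * t * d₂)) := by
  obtain ⟨μ₁, _, hμ₁, rfl⟩ := exists_eq_charFun_of_memLp hX₁ hφ₁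
  obtain ⟨μ₂, _, hμ₂, rfl⟩ := exists_eq_charFun_of_memLp hX₂ hφ₂
  obtain ⟨hcos, hsin⟩ := cos_ne_zero_and_sin_ne_zero hθ
  obtain ⟨c, m₁, m₂, hexp⟩ := DarmoisSkitovichEq.exists_eq_exp hfe hcos hsin
    (Real.cos_sq_add_sin_sq θ) ((contDiff_charFun (n := 2) hμ₁).of_le one_le_two)
    ((contDiff_charFun (n := 2) hμ₂).of_le one_le_two) (by simp) (by simp)
  obtain ⟨v, d₁, hv, rfl, rfl⟩ := exists_real_of_charFun_eq_exp fun t => (hexp t).1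
  obtain ⟨-, d₂, -, -, rfl⟩ := exists_real_of_charFun_eq_exp fun t => (hexp t).2
  refine ⟨v, hv, d₁, d₂, fun t => ?_, fun t => ?_⟩ <;>
  · simp only [hexp]
    congr 1
    push_cast
    ring
end
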